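/- Regularised SVD, symmetric version: Let A be a real n×m matrix of rank r, k ≤ r, D ∈ ℝ^{d×n}, G ∈ ℝ^{g×m}, λ, μ ≥ 0, L = DᵀD, M = GᵀG, and S(q) = λL − A q qᵀ Aᵀ for q ∈ ℝ^m. Then the constrained minimum of F(P,Q,B) = ‖A − PBQᵀ‖² + λ‖DP‖² + μ‖GQ‖² over P ∈ ℝ^{n×k} with unit-norm columns, Q ∈ ℝ^{m×k} with QᵀQ = I_k, and diagonal B equals ‖A‖² + min{ Σ_{i=1}^k ( λ_min(S(q_i)) + μ·q_iᵀ M q_i ) : Q = [q₁,…,q_k] ∈ ℝ^{m×k}, QᵀQ = I_k }. Given an optimal Q, an optimal P takes p_i to be a unit eigenvector of S(q_i) for its smallest eigenvalue, and the optimal B has β_i = (PᵀAQ)_{ii}. -/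
import Mathlib


open Matrix BigOperators

/-- Squared Frobenius norm of a real matrix. -/
noncomputable def frobSq {n m : ℕ} (X : Matrix (Fin n) (Fin m) ℝ) : ℝ :=
  ∑ i, ∑ j, (X i j) ^ 2

lemma frobSq_eq_trace {n m : ℕ} (X : Matrix (Fin n) (Fin m) ℝ) :
    frobSq X = Matrix.trace (Xᵀ * X) := by
  simp [frobSq, Matrix.trace, Matrix.mul_apply, Matrix.diag, sq]
  rw [Finset.sum_comm]

lemma col_diag {n k : ℕ} (P : Matrix (Fin n) (Fin k) ℝ) (N : Matrix (Fin n) (Fin n) ℝ) (i : Fin k) :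
    (Pᵀ * N * P) i i = (fun a => P a i) ⬝ᵥ (N *ᵥ fun a => P a i) := by
  simp [Matrix.mul_apply, dotProduct, Matrix.mulVec, Finset.mul_sum, Finset.sum_mul, mul_assoc]
  rw [Finset.sum_comm]

lemma colAQ {n m k : ℕ} (A : Matrix (Fin n) (Fin m) ℝ) (P : Matrix (Fin n) (Fin k) ℝ)
    (Q : Matrix (Fin m) (Fin k) ℝ) (i : Fin k) :
    (Pᵀ * A * Q) i i = (fun a => P a i) ⬝ᵥ (A *ᵥ fun a => Q a i) := by
  simp [Matrix.mul_apply, dotProduct, Matrix.mulVec, Finset.mul_sum, Finset.sum_mul, mul_assoc]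
  rw [Finset.sum_comm]

lemma frobSq_reg {n d k : ℕ} (D : Matrix (Fin d) (Fin n) ℝ) (P : Matrix (Fin n) (Fin k) ℝ) :
    frobSq (D * P) = ∑ i, (fun a => P a i) ⬝ᵥ ((Dᵀ * D) *ᵥ fun a => P a i) := by
  rw [frobSq_eq_trace]
  rw [Matrix.transpose_mul]
  have : Pᵀ * Dᵀ * (D * P) = Pᵀ * (Dᵀ * D) * P := by simp [Matrix.mul_assoc]
  rw [this, Matrix.trace]
  exact Finset.sum_congr rfl fun i _ => col_diag P (Dᵀ*D) i

lemma key {n m k : ℕ} (A : Matrix (Fin n) (Fin m) ℝ) (P : Matrix (Fin n) (Fin k) ℝ)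
    (Q : Matrix (Fin m) (Fin k) ℝ) (β : Fin k → ℝ)
    (hP : ∀ i, ∑ a, P a i ^ 2 = 1) (hQ : Qᵀ * Q = 1) :
    frobSq (A - P * Matrix.diagonal β * Qᵀ) =
      frobSq A + ∑ i, (β i ^ 2 - 2 * β i * ((Pᵀ * A * Q) i i)) := by
  set X := P * Matrix.diagonal β * Qᵀ with hX
  have hXT : Xᵀ = Q * Matrix.diagonal β * Pᵀ := by
    simp [hX, Matrix.transpose_mul, Matrix.diagonal_transpose, Matrix.mul_assoc]
  have h1 : Matrix.trace (Xᵀ * A) = ∑ i, β i * (Pᵀ * A * Q) i i := by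
    rw [hXT, Matrix.mul_assoc, Matrix.mul_assoc, Matrix.trace_mul_comm]
    simp [Matrix.trace, Matrix.diag, Matrix.diagonal_mul, Matrix.mul_assoc]
  have h2 : Matrix.trace (Xᵀ * X) = ∑ i, β i ^ 2 := by
    rw [hXT, hX]
    have : Q * Matrix.diagonal β * Pᵀ * (P * Matrix.diagonal β * Qᵀ)
        = Q * (Matrix.diagonal β * (Pᵀ * P) * Matrix.diagonal β * Qᵀ) := by
      simp [Matrix.mul_assoc]
    rw [this, Matrix.trace_mul_comm]
    have : Matrix.diagonal β * (Pᵀ * P) * Matrix.diagonal β * Qᵀ * Q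
        = Matrix.diagonal β * (Pᵀ * P) * Matrix.diagonal β := by
      rw [Matrix.mul_assoc, Matrix.mul_assoc, Matrix.mul_assoc, hQ]
      simp [Matrix.mul_assoc]
    rw [this]
    have hPP : ∀ i, (Pᵀ * P) i i = 1 := by
      intro i
      have := hP i
      simp [Matrix.mul_apply, ← sq]
      simpa using this
    have hd : ∀ i, (Matrix.diagonal β * (Pᵀ * P) * Matrix.diagonal β) i i
        = β i * (Pᵀ * P) i i * β i := by
      intro i; rw [Matrix.mul_diagonal, Matrix.diagonal_mul]
    rw [Matrix.trace]
    apply Finset.sum_congr rfl; intro i _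
    rw [Matrix.diag, hd i, hPP i]; ring
  have hAX : Matrix.trace (Aᵀ * X) = Matrix.trace (Xᵀ * A) := by
    rw [← Matrix.trace_transpose (Aᵀ * X), Matrix.transpose_mul, Matrix.transpose_transpose]
  rw [frobSq_eq_trace, frobSq_eq_trace, Matrix.transpose_sub, Matrix.sub_mul,
    Matrix.mul_sub, Matrix.mul_sub, Matrix.trace_sub, Matrix.trace_sub, Matrix.trace_sub,
    hAX, h1, h2]
  rw [Finset.sum_sub_distrib]
  have : ∑ x, 2 * β x * (Pᵀ * A * Q) x x = 2 * ∑ x, β x * (Pᵀ * A * Q) x x := by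
    rw [Finset.mul_sum]; apply Finset.sum_congr rfl; intro i _; ring
  rw [this]; ring

lemma quad_S (lam : ℝ) {n : ℕ} (L : Matrix (Fin n) (Fin n) ℝ) (u p : Fin n → ℝ) :
    p ⬝ᵥ ((lam • L - vecMulVec u u) *ᵥ p) = lam * (p ⬝ᵥ (L *ᵥ p)) - (p ⬝ᵥ u) ^ 2 := by
  rw [Matrix.sub_mulVec, dotProduct_sub, Matrix.smul_mulVec, dotProduct_smul]
  congr 1
  · simp [dotProduct, Matrix.mulVec, vecMulVec, Finset.mul_sum, Finset.sum_mul, sq]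
    apply Finset.sum_congr rfl; intro i _
    apply Finset.sum_congr rfl; intro j _
    ring

/-- **Regularised SVD, symmetric version.** The constrained minimum of
`F(P,Q,B) = ‖A - PBQᵀ‖² + λ‖DP‖² + μ‖GQ‖²` over `P` with unit-norm columns,
`Q` with `QᵀQ = Iₖ` and diagonal `B` equals
`‖A‖² + min { ∑ᵢ (λ_min(S(qᵢ)) + μ qᵢᵀ M qᵢ) : QᵀQ = Iₖ }` where
`S(q) = λL - Aqqᵀ Aᵀ` and `M = GᵀG`. Given an optimal `Q`, an optimal `P`
takes `pᵢ` a unit eigenvector of `S(qᵢ)` for its smallest eigenvalue, and the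
optimal `B` has `βᵢ = (PᵀAQ)ᵢᵢ`. -/
theorem regularised_svd_symmetric {n m d g r k : ℕ}
    (A : Matrix (Fin n) (Fin m) ℝ) (hrank : A.rank = r) (hkr : k ≤ r)
    (D : Matrix (Fin d) (Fin n) ℝ) (G : Matrix (Fin g) (Fin m) ℝ)
    (lam mu : ℝ) (hlam : 0 ≤ lam) (hmu : 0 ≤ mu)
    (L : Matrix (Fin n) (Fin n) ℝ) (hL : L = Dᵀ * D)
    (M : Matrix (Fin m) (Fin m) ℝ) (hM : M = Gᵀ * G)
    (S : (Fin m → ℝ) → Matrix (Fin n) (Fin n) ℝ)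
    (hS : ∀ q, S q = lam • L - vecMulVec (A *ᵥ q) (A *ᵥ q))
    -- `lammin q` is the smallest eigenvalue of the symmetric matrix `S q`
    (lammin : (Fin m → ℝ) → ℝ)
    (hlammin_eig : ∀ q : Fin m → ℝ, ∃ wq : Fin n → ℝ,
        (∑ a, wq a ^ 2 = 1) ∧ S q *ᵥ wq = lammin q • wq)
    (hlammin_min : ∀ (q : Fin m → ℝ) (p : Fin n → ℝ),
        (∑ a, p a ^ 2 = 1) → lammin q ≤ p ⬝ᵥ (S q *ᵥ p))
    -- `Qopt` minimises `ψ(Q) = ∑ᵢ (λ_min(S(qᵢ)) + μ qᵢᵀ M qᵢ)` over the Stiefel manifold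
    (Qopt : Matrix (Fin m) (Fin k) ℝ) (hQopt : Qoptᵀ * Qopt = 1)
    (hQopt_min : ∀ Q' : Matrix (Fin m) (Fin k) ℝ, Q'ᵀ * Q' = 1 →
        ∑ i, (lammin (fun a => Qopt a i) + mu * ((fun a => Qopt a i) ⬝ᵥ (M *ᵥ fun a => Qopt a i))) ≤
        ∑ i, (lammin (fun a => Q' a i) + mu * ((fun a => Q' a i) ⬝ᵥ (M *ᵥ fun a => Q' a i))))
    -- eigenvector columns for the optimal `P` and optimal diagonal entries of `B`
    (w : Fin k → (Fin n → ℝ))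
    (hw_unit : ∀ i, ∑ a, w i a ^ 2 = 1)
    (hw_eig : ∀ i, S (fun a => Qopt a i) *ᵥ w i = lammin (fun a => Qopt a i) • w i)
    (P₀ : Matrix (Fin n) (Fin k) ℝ) (hP₀ : P₀ = Matrix.of fun a i => w i a)
    (β₀ : Fin k → ℝ) (hβ₀ : ∀ i, β₀ i = (P₀ᵀ * A * Qopt) i i) :
    (∀ (P : Matrix (Fin n) (Fin k) ℝ) (Q : Matrix (Fin m) (Fin k) ℝ) (β : Fin k → ℝ),
        (∀ i, ∑ a, P a i ^ 2 = 1) → Qᵀ * Q = 1 →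
        frobSq A +
            ∑ i, (lammin (fun a => Qopt a i) +
              mu * ((fun a => Qopt a i) ⬝ᵥ (M *ᵥ fun a => Qopt a i))) ≤
          frobSq (A - P * Matrix.diagonal β * Qᵀ) + lam * frobSq (D * P) + mu * frobSq (G * Q)) ∧
    (∀ i, ∑ a, P₀ a i ^ 2 = 1) ∧
    frobSq (A - P₀ * Matrix.diagonal β₀ * Qoptᵀ) + lam * frobSq (D * P₀) + mu * frobSq (G * Qopt) =
      frobSq A +
        ∑ i, (lammin (fun a => Qopt a i) +
          mu * ((fun a => Qopt a i) ⬝ᵥ (M *ᵥ fun a => Qopt a i))) := by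
  -- general expansion of the objective
  have expand : ∀ (P : Matrix (Fin n) (Fin k) ℝ) (Q : Matrix (Fin m) (Fin k) ℝ) (β : Fin k → ℝ),
      (∀ i, ∑ a, P a i ^ 2 = 1) → Qᵀ * Q = 1 →
      frobSq (A - P * Matrix.diagonal β * Qᵀ) + lam * frobSq (D * P) + mu * frobSq (G * Q)
        = frobSq A + ∑ i,
          ((β i - (Pᵀ * A * Q) i i) ^ 2
            + (fun a => P a i) ⬝ᵥ (S (fun a => Q a i) *ᵥ fun a => P a i)
            + mu * ((fun a => Q a i) ⬝ᵥ (M *ᵥ fun a => Q a i))) := by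
    intro P Q β hP hQ
    rw [key A P Q β hP hQ, frobSq_reg D P, frobSq_reg G Q, ← hL, ← hM,
      Finset.mul_sum, Finset.mul_sum]
    have hSq : ∀ i : Fin k, (fun a => P a i) ⬝ᵥ (S (fun a => Q a i) *ᵥ fun a => P a i)
        = lam * ((fun a => P a i) ⬝ᵥ (L *ᵥ fun a => P a i))
          - ((Pᵀ * A * Q) i i) ^ 2 := by
      intro i
      rw [hS, quad_S, colAQ]
    rw [add_assoc, add_assoc, ← Finset.sum_add_distrib, ← Finset.sum_add_distrib]
    congr 1
    apply Finset.sum_congr rfl; intro i _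
    rw [hSq i]; ring
  have hP₀_unit : ∀ i, ∑ a, P₀ a i ^ 2 = 1 := by
    intro i; rw [hP₀]; simpa using hw_unit i
  have hcol₀ : ∀ i : Fin k, (fun a => P₀ a i) = w i := by
    intro i; funext a; rw [hP₀]; rfl
  refine ⟨?_, hP₀_unit, ?_⟩
  · intro P Q β hP hQ
    rw [expand P Q β hP hQ]
    gcongr frobSq A + ?_
    calc ∑ i, (lammin (fun a => Qopt a i) +
            mu * ((fun a => Qopt a i) ⬝ᵥ (M *ᵥ fun a => Qopt a i)))
        ≤ ∑ i, (lammin (fun a => Q a i) +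
            mu * ((fun a => Q a i) ⬝ᵥ (M *ᵥ fun a => Q a i))) := hQopt_min Q hQ
      _ ≤ _ := by
          apply Finset.sum_le_sum; intro i _
          have h1 : lammin (fun a => Q a i)
              ≤ (fun a => P a i) ⬝ᵥ (S (fun a => Q a i) *ᵥ fun a => P a i) :=
            hlammin_min _ _ (hP i)
          nlinarith [sq_nonneg (β i - (Pᵀ * A * Q) i i)]
  · rw [expand P₀ Qopt β₀ hP₀_unit hQopt]
    congr 1
    apply Finset.sum_congr rfl; intro i _
    have h1 : (β₀ i - (P₀ᵀ * A * Qopt) i i) ^ 2 = 0 := by rw [hβ₀ i]; ring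
    have h2 : (fun a => P₀ a i) ⬝ᵥ (S (fun a => Qopt a i) *ᵥ fun a => P₀ a i)
        = lammin (fun a => Qopt a i) := by
      rw [hcol₀ i, hw_eig i, dotProduct_smul]
      have : w i ⬝ᵥ w i = 1 := by simpa [dotProduct, sq] using hw_unit i
      rw [this]; simp
    rw [h1, h2]; ring
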